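/- Let N be a positive integer, h > 0, τ ∈ ℝ, and κ₁, κ₂, μ, γ real constants. Consider periodic grid functions Pⁿ, Qⁿ, Uⁿ, Vⁿ and P^{n+1}, Q^{n+1}, U^{n+1}, V^{n+1} : (ZMod N) × (ZMod N) → ℝ satisfying, at every grid point (j,k), the dual-partition AVF scheme with parameters S = W = 1, E = N = 0: (P^{n+1} − Pⁿ)_{j,k}/τ = −(κ₁/(2h²))(Q^{n+1}_{j,k−1} + Q^{n+1}_{j−1,k} − 4 Q^{n+1/2}_{j,k} + Qⁿ_{j+1,k} + Qⁿ_{j,k+1}) − γ Uⁿ_{j,k} Q^{n+1/2}_{j,k}; (Q^{n+1} − Qⁿ)_{j,k}/τ = (κ₁/(2h²))(P^{n+1}_{j,k−1} + P^{n+1}_{j−1,k} − 4 P^{n+1/2}_{j,k} + Pⁿ_{j+1,k} + Pⁿ_{j,k+1}) + γ Uⁿ_{j,k} P^{n+1/2}_{j,k}; (U^{n+1} − Uⁿ)_{j,k}/τ = V^{n+1/2}_{j,k}; (V^{n+1} − Vⁿ)_{j,k}/τ = (κ₂/h²)(U^{n+1}_{j,k−1} + U^{n+1}_{j−1,k} −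 4 U^{n+1/2}_{j,k} + Uⁿ_{j+1,k} + Uⁿ_{j,k+1}) − μ² U^{n+1/2}_{j,k} + γ((P^{n+1}_{j,k})² + (Q^{n+1}_{j,k})²), where X^{n+1/2} = (X^{n+1} + Xⁿ)/2. Then the fully discrete energy E_h(P,Q,U,V) = h² Σ_{j,k} [ −(κ₁/2) P_{j,k}(Δ_h P)_{j,k} − (κ₁/2) Q_{j,k}(Δ_h Q)_{j,k} − (κ₂/2) U_{j,k}(Δ_h U)_{j,k} + (1/2)V_{j,k}² + (μ²/2)U_{j,k}² − γ(P_{j,k}² + Q_{j,k}²)U_{j,k} ] is exactly conserved: E_h(P^{n+1},Q^{n+1},U^{n+1},V^{n+1}) = E_h(Pⁿ,Qⁿ,Uⁿ,Vⁿ). -/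
import Mathlib


/-- The fully discrete energy of the dual-partition AVF scheme for the 2D periodic
Klein–Gordon–Schrödinger equations:
`E_h(P,Q,U,V) = h² Σ_{j,k} [ −(κ₁/2) P Δ_h P − (κ₁/2) Q Δ_h Q − (κ₂/2) U Δ_h U
  + V²/2 + μ² U²/2 − γ (P² + Q²) U ]`. -/
noncomputable def kgsDiscreteEnergy (N : ℕ) [NeZero N] (h κ₁ κ₂ μ γ : ℝ)
    (P Q U V : ZMod N × ZMod N → ℝ) : ℝ :=
  h ^ 2 * ∑ jk : ZMod N × ZMod N,
    (-(κ₁ / 2) * P jk *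
        ((P (jk.1 + 1, jk.2) + P (jk.1 - 1, jk.2) + P (jk.1, jk.2 + 1) + P (jk.1, jk.2 - 1)
          - 4 * P jk) / h ^ 2)
      - (κ₁ / 2) * Q jk *
        ((Q (jk.1 + 1, jk.2) + Q (jk.1 - 1, jk.2) + Q (jk.1, jk.2 + 1) + Q (jk.1, jk.2 - 1)
          - 4 * Q jk) / h ^ 2)
      - (κ₂ / 2) * U jk *
        ((U (jk.1 + 1, jk.2) + U (jk.1 - 1, jk.2) + U (jk.1, jk.2 + 1) + U (jk.1, jk.2 - 1)
          - 4 * U jk) / h ^ 2)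
      + (1 / 2) * (V jk) ^ 2 + (μ ^ 2 / 2) * (U jk) ^ 2
      - γ * ((P jk) ^ 2 + (Q jk) ^ 2) * U jk)

private lemma kgs_sum_shift₁ {N : ℕ} [NeZero N] (f : ZMod N × ZMod N → ℝ) :
    ∑ jk : ZMod N × ZMod N, f (jk.1 + 1, jk.2) = ∑ jk : ZMod N × ZMod N, f jk :=
  Fintype.sum_equiv (Equiv.prodCongr (Equiv.addRight (1 : ZMod N)) (Equiv.refl (ZMod N)))
    _ f (fun _ => rfl)

private lemma kgs_sum_shift₂ {N : ℕ} [NeZero N] (f : ZMod N × ZMod N → ℝ) :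
    ∑ jk : ZMod N × ZMod N, f (jk.1, jk.2 + 1) = ∑ jk : ZMod N × ZMod N, f jk :=
  Fintype.sum_equiv (Equiv.prodCongr (Equiv.refl (ZMod N)) (Equiv.addRight (1 : ZMod N)))
    _ f (fun _ => rfl)

private lemma kgs_telescope {N : ℕ} [NeZero N] (T₁ T₂ : ZMod N × ZMod N → ℝ) :
    ∑ jk : ZMod N × ZMod N, (T₁ jk - T₁ (jk.1 + 1, jk.2) + (T₂ jk - T₂ (jk.1, jk.2 + 1))) = 0 := by
  rw [Finset.sum_add_distrib, Finset.sum_sub_distrib, Finset.sum_sub_distrib,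
      kgs_sum_shift₁ T₁, kgs_sum_shift₂ T₂]
  ring

/-- Exact conservation of the fully discrete energy by the dual-partition AVF scheme
for the 2D Klein–Gordon–Schrödinger equations, with grid-point partition parameters
`S = W = 1`, `E = N = 0` (lexicographic update order: south and west neighbors carry
new-level values, east and north neighbors carry old-level values). -/
theorem kgs_dual_partition_avf_energy_conservation (N : ℕ) [NeZero N]
    (h : ℝ) (hh : 0 < h) (τ : ℝ) (κ₁ κ₂ μ γ : ℝ)
    (P Q U V P' Q' U' V' : ZMod N × ZMod N → ℝ)
    (hP : ∀ j k : ZMod N,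
      (P' (j, k) - P (j, k)) / τ
        = -(κ₁ / (2 * h ^ 2)) * (Q' (j, k - 1) + Q' (j - 1, k)
            - 4 * ((Q' (j, k) + Q (j, k)) / 2) + Q (j + 1, k) + Q (j, k + 1))
          - γ * U (j, k) * ((Q' (j, k) + Q (j, k)) / 2))
    (hQ : ∀ j k : ZMod N,
      (Q' (j, k) - Q (j, k)) / τ
        = (κ₁ / (2 * h ^ 2)) * (P' (j, k - 1) + P' (j - 1, k)
            - 4 * ((P' (j, k) + P (j, k)) / 2) + P (j + 1, k) + P (j, k + 1))
          + γ * U (j, k) * ((P' (j, k) + P (j, k)) / 2))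
    (hU : ∀ j k : ZMod N,
      (U' (j, k) - U (j, k)) / τ = (V' (j, k) + V (j, k)) / 2)
    (hV : ∀ j k : ZMod N,
      (V' (j, k) - V (j, k)) / τ
        = (κ₂ / h ^ 2) * (U' (j, k - 1) + U' (j - 1, k)
            - 4 * ((U' (j, k) + U (j, k)) / 2) + U (j + 1, k) + U (j, k + 1))
          - μ ^ 2 * ((U' (j, k) + U (j, k)) / 2)
          + γ * ((P' (j, k)) ^ 2 + (Q' (j, k)) ^ 2)) :
    kgsDiscreteEnergy N h κ₁ κ₂ μ γ P' Q' U' V' = kgsDiscreteEnergy N h κ₁ κ₂ μ γ P Q U V := by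
  classical
  -- telescoping correctors
  set T₁ : ZMod N × ZMod N → ℝ := fun jk =>
    (κ₁ / (2 * h ^ 2)) * (P' (jk.1 - 1, jk.2) * P' jk + Q' (jk.1 - 1, jk.2) * Q' jk
        + P (jk.1 - 1, jk.2) * P jk + Q (jk.1 - 1, jk.2) * Q jk)
      + (κ₂ / (2 * h ^ 2)) * (U' (jk.1 - 1, jk.2) * U' jk + U (jk.1 - 1, jk.2) * U jk)
      - (κ₁ / h ^ 2) * (P jk * P' (jk.1 - 1, jk.2) + Q jk * Q' (jk.1 - 1, jk.2))
      - (κ₂ / h ^ 2) * (U jk * U' (jk.1 - 1, jk.2)) with hT₁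
  set T₂ : ZMod N × ZMod N → ℝ := fun jk =>
    (κ₁ / (2 * h ^ 2)) * (P' (jk.1, jk.2 - 1) * P' jk + Q' (jk.1, jk.2 - 1) * Q' jk
        + P (jk.1, jk.2 - 1) * P jk + Q (jk.1, jk.2 - 1) * Q jk)
      + (κ₂ / (2 * h ^ 2)) * (U' (jk.1, jk.2 - 1) * U' jk + U (jk.1, jk.2 - 1) * U jk)
      - (κ₁ / h ^ 2) * (P jk * P' (jk.1, jk.2 - 1) + Q jk * Q' (jk.1, jk.2 - 1))
      - (κ₂ / h ^ 2) * (U jk * U' (jk.1, jk.2 - 1)) with hT₂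
  unfold kgsDiscreteEnergy
  rw [← sub_eq_zero, ← mul_sub, ← Finset.sum_sub_distrib]
  have key : ∀ jk : ZMod N × ZMod N,
      (-(κ₁ / 2) * P' jk *
          ((P' (jk.1 + 1, jk.2) + P' (jk.1 - 1, jk.2) + P' (jk.1, jk.2 + 1) + P' (jk.1, jk.2 - 1)
            - 4 * P' jk) / h ^ 2)
        - (κ₁ / 2) * Q' jk *
          ((Q' (jk.1 + 1, jk.2) + Q' (jk.1 - 1, jk.2) + Q' (jk.1, jk.2 + 1) + Q' (jk.1, jk.2 - 1)
            - 4 * Q' jk) / h ^ 2)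
        - (κ₂ / 2) * U' jk *
          ((U' (jk.1 + 1, jk.2) + U' (jk.1 - 1, jk.2) + U' (jk.1, jk.2 + 1) + U' (jk.1, jk.2 - 1)
            - 4 * U' jk) / h ^ 2)
        + (1 / 2) * (V' jk) ^ 2 + (μ ^ 2 / 2) * (U' jk) ^ 2
        - γ * ((P' jk) ^ 2 + (Q' jk) ^ 2) * U' jk)
      - (-(κ₁ / 2) * P jk *
          ((P (jk.1 + 1, jk.2) + P (jk.1 - 1, jk.2) + P (jk.1, jk.2 + 1) + P (jk.1, jk.2 - 1)
            - 4 * P jk) / h ^ 2)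
        - (κ₁ / 2) * Q jk *
          ((Q (jk.1 + 1, jk.2) + Q (jk.1 - 1, jk.2) + Q (jk.1, jk.2 + 1) + Q (jk.1, jk.2 - 1)
            - 4 * Q jk) / h ^ 2)
        - (κ₂ / 2) * U jk *
          ((U (jk.1 + 1, jk.2) + U (jk.1 - 1, jk.2) + U (jk.1, jk.2 + 1) + U (jk.1, jk.2 - 1)
            - 4 * U jk) / h ^ 2)
        + (1 / 2) * (V jk) ^ 2 + (μ ^ 2 / 2) * (U jk) ^ 2
        - γ * ((P jk) ^ 2 + (Q jk) ^ 2) * U jk)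
      = T₁ jk - T₁ (jk.1 + 1, jk.2) + (T₂ jk - T₂ (jk.1, jk.2 + 1)) := by
    rintro ⟨j, k⟩
    have h1 := hP j k
    have h2 := hQ j k
    have h3 := hU j k
    have h4 := hV j k
    simp only [hT₁, hT₂]
    linear_combination (norm := ring_nf)
      (-2 * (Q' (j, k) - Q (j, k))) * h1 + (2 * (P' (j, k) - P (j, k))) * h2
      + (-(V' (j, k) - V (j, k))) * h3 + (U' (j, k) - U (j, k)) * h4
  rw [Finset.sum_congr rfl (fun jk _ => key jk), kgs_telescope T₁ T₂, mul_zero]
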